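/- Let k ≥ 1 and c ≥ 1 be integers, let δ > 0 and let n ≥ 1. Let G₁ be a graph on a finite vertex set V equipped with a k-multicolouring, i.e. spanning subgraphs G¹, …, Gᵏ of G₁ whose edge sets have union E(G₁). Suppose that: (i) every vertex of G₁ has at most δn non-neighbours in G₁; (ii) for every ℓ ∈ {1,…,k}, the graph Gˡ has at most c connected components (counting isolated vertices as components); and (iii) for every ℓ ∈ {1,…,k}, every connected component of Gˡ induces in Gˡ a complete blow-up of a star. Then the complement of G₁ has no matching with more than (2c)^{2k}·4^k·δn edges. -/

import Mathlib

/-!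
Orient each edge `(u, v)` of the matching and handle one colour at a time, passing to a
sub-matching at most `4c²` times smaller in which no edge of that colour goes from a first end
`u` to a second end `v'`. By pigeonhole, a `c⁻²` fraction of the pairs have their first ends in
one component and their second ends in one component. If these components differ, nothing
remains to do. Otherwise the component is a complete blow-up of a star, so the two ends of a
non-edge lie in different cliques `B i ≠ B j`, and some set `T` of indices keeps a quarter of
the pairs with `i ∈ T` and `j ∉ T`. Once all colours are handled, the second ends are distinct
non-neighbours of any single first end, so there are at most `δn` of them.
-/

open SimpleGraph

variable {V : Type*} {k : ℕ}

/-- The subgraph of `G` spanned by the edges of colour `ℓ`. -/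
def colourGraph (G : SimpleGraph V) (χ : Sym2 V → Fin k) (ℓ : Fin k) : SimpleGraph V where
  Adj u v := G.Adj u v ∧ χ s(u, v) = ℓ
  symm := by
    constructor
    intro u v h
    exact ⟨h.1.symm, by rw [Sym2.eq_swap]; exact h.2⟩
  loopless := by
    constructor
    intro u h
    exact G.irrefl h.1

/-- `M` is a matching in `H`: its pairs are edges of `H` and are pairwise vertex-disjoint. -/
def IsMatchingSet (H : SimpleGraph V) (M : Finset (V × V)) : Prop :=
  (∀ e ∈ M, H.Adj e.1 e.2) ∧
  (∀ e ∈ M, ∀ e' ∈ M, e ≠ e' →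
    e.1 ≠ e'.1 ∧ e.1 ≠ e'.2 ∧ e.2 ≠ e'.1 ∧ e.2 ≠ e'.2)

/-- `M` is a connected matching in `H`: a matching contained in one component of `H`. -/
def IsConnMatching (H : SimpleGraph V) (M : Finset (V × V)) : Prop :=
  IsMatchingSet H M ∧ ∀ e ∈ M, ∀ e' ∈ M, H.Reachable e.1 e'.1

/-- A piece of a 2-matching: a list of vertices forming either an edge or an odd cycle of `H`. -/
def IsTwoMatchPiece (H : SimpleGraph V) (l : List V) : Prop :=
  2 ≤ l.length ∧ (l.length = 2 ∨ Odd l.length) ∧ l.Nodup ∧ l.Chain' H.Adj ∧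
    ∀ (h : l ≠ []), H.Adj (l.getLast h) (l.head h)

/-- A 2-matching in `H`: a collection of pairwise vertex-disjoint edges and odd cycles. -/
def IsTwoMatching (H : SimpleGraph V) (P : List (List V)) : Prop :=
  (∀ l ∈ P, IsTwoMatchPiece H l) ∧
    P.Pairwise (fun l₁ l₂ => ∀ v ∈ l₁, v ∉ l₂)

/-- The order of a 2-matching: the number of vertices it covers. -/
def twoMatchOrder (P : List (List V)) : ℕ := (P.map List.length).sum

/-- A connected 2-matching: a 2-matching contained in one component of `H`. -/
def IsConnTwoMatching (H : SimpleGraph V) (P : List (List V)) : Prop :=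
  IsTwoMatching H P ∧ ∀ l ∈ P, ∀ v ∈ l, ∀ l' ∈ P, ∀ v' ∈ l', H.Reachable v v'

/-- The component of `H` containing the matching `M` is non-bipartite (contains an odd cycle). -/
def MatchingInNonBipComponent (H : SimpleGraph V) (M : Finset (V × V)) : Prop :=
  ∃ (w : V) (p : H.Walk w w), p.IsCycle ∧ Odd p.length ∧ ∀ e ∈ M, H.Reachable e.1 w

/-- The component of `H` containing the 2-matching `P` is non-bipartite. -/
def TwoMatchingInNonBipComponent (H : SimpleGraph V) (P : List (List V)) : Prop :=
  ∃ (w : V) (p : H.Walk w w), p.IsCycle ∧ Odd p.length ∧ ∀ l ∈ P, ∀ v ∈ l, H.Reachable v w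

/-- `H` contains a cycle of length `t`. -/
def HasCycleLen (H : SimpleGraph V) (t : ℕ) : Prop :=
  ∃ (w : V) (p : H.Walk w w), p.IsCycle ∧ p.length = t

/-- `H` contains a path on `n` vertices. -/
def HasPathOn (H : SimpleGraph V) (n : ℕ) : Prop :=
  ∃ (u v : V) (p : H.Walk u v), p.IsPath ∧ p.length + 1 = n

/-- The blow-up `F(m₁, …, m_s)` of a graph `F` on `[s]`, possibly with loops, where vertex `i`
is replaced by `m i` vertices. -/
def blowup {s : ℕ} (F : Fin s → Fin s → Prop) (hF : Symmetric F) (m : Fin s → ℕ) :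
    SimpleGraph ((i : Fin s) × Fin (m i)) where
  Adj x y := x ≠ y ∧ F x.1 y.1
  symm := by
    constructor
    intro x y h
    exact ⟨h.1.symm, hF h.2⟩
  loopless := by
    constructor
    intro x h
    exact h.1 rfl

/-- The largest even natural number which is at most `x`. -/
noncomputable def evenFloor (x : ℝ) : ℕ := 2 * ⌊x / 2⌋₊

/-- The largest odd natural number which is at most `x` (for `x ≥ 1`). -/
noncomputable def oddFloor (x : ℝ) : ℕ := 2 * ⌊(x - 1) / 2⌋₊ + 1

open Finset

lemma exists_card_le_natCard_mul_card_fiber {α β : Type*} [Finite β] [Nonempty β]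
    [DecidableEq β] (s : Finset α) (g : α → β) :
    ∃ b, #s ≤ Nat.card β * #{a ∈ s | g a = b} := by
  have := Fintype.ofFinite β
  obtain ⟨b, -, hb⟩ := exists_le_of_sum_le (univ_nonempty (α := β))
    (f := fun _ => #s) (g := fun b => Nat.card β * #{a ∈ s | g a = b}) <| by
      rw [sum_const, card_univ, ← mul_sum,
        ← card_eq_sum_card_fiberwise fun a _ => mem_univ (g a), Nat.card_eq_fintype_card,
        smul_eq_mul]
  exact ⟨b, hb⟩

lemma two_pow_card_le_four_mul_card_filter_mem_notMem {ι : Type*} [Fintype ι]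
    [DecidableEq ι] {i j : ι} (hij : i ≠ j) :
    2 ^ Fintype.card ι ≤ 4 * #{T : Finset ι | i ∈ T ∧ j ∉ T} := by
  set U := (univ.erase i).erase j
  have hjU : j ∉ U := notMem_erase j _
  have hiU : i ∉ U := fun h => notMem_erase i _ (mem_of_mem_erase h)
  have hU : #U + 2 = Fintype.card ι := by
    rw [← card_univ, ← card_erase_add_one (mem_univ i),
      ← card_erase_add_one (mem_erase.2 ⟨hij.symm, mem_univ j⟩)]
  calc 2 ^ Fintype.card ι = 4 * #U.powerset := by rw [card_powerset, ← hU, pow_add]; ring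
    _ ≤ _ := by
      refine Nat.mul_le_mul_left 4 (card_le_card_of_injOn (insert i) (fun S hS => ?_) ?_)
      · rw [mem_coe, mem_powerset] at hS
        rw [coe_filter]
        exact ⟨mem_univ _, mem_insert_self i S,
          fun h => (mem_insert.1 h).elim hij.symm fun h => hjU (hS h)⟩
      · intro S hS S' hS' h
        rw [mem_coe, mem_powerset] at hS hS'
        rw [← erase_insert fun h => hiU (hS h), ← erase_insert fun h => hiU (hS' h), h]

/-- Averaging over all `T`: each `a` is kept by at least a quarter of the cuts. -/
lemma exists_card_le_four_mul_card_filter_cut {α ι : Type*} [Fintype ι] [DecidableEq ι]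
    (s : Finset α) (p q : α → ι) (hpq : ∀ a ∈ s, p a ≠ q a) :
    ∃ T : Finset ι, #s ≤ 4 * #{a ∈ s | p a ∈ T ∧ q a ∉ T} := by
  obtain ⟨T, -, hT⟩ := exists_le_of_sum_le (univ_nonempty (α := Finset ι))
    (f := fun _ => #s) (g := fun T => 4 * #{a ∈ s | p a ∈ T ∧ q a ∉ T}) <| by
      calc ∑ _ : Finset ι, #s = ∑ _ ∈ s, 2 ^ Fintype.card ι := by
            simp only [sum_const, card_univ, Fintype.card_finset, smul_eq_mul, mul_comm]
        _ ≤ ∑ a ∈ s, 4 * #{T : Finset ι | p a ∈ T ∧ q a ∉ T} :=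
            sum_le_sum fun a ha => two_pow_card_le_four_mul_card_filter_mem_notMem (hpq a ha)
        _ = ∑ T : Finset ι, 4 * #{a ∈ s | p a ∈ T ∧ q a ∉ T} := by
            rw [← mul_sum, ← mul_sum]
            exact congrArg _ (sum_card_bipartiteAbove_eq_sum_card_bipartiteBelow
              (r := fun a T => p a ∈ T ∧ q a ∉ T))
  exact ⟨T, hT⟩

def IsCrossFree (H : SimpleGraph V) (N : Finset (V × V)) : Prop :=
  ∀ e ∈ N, ∀ e' ∈ N, ¬ H.Adj e.1 e'.2

def IsStarBlowupOn (H : SimpleGraph V) (S : Set V) : Prop :=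
  ∃ (A : Set V) (r : ℕ) (B : Fin r → Set V),
    (A ∪ ⋃ i, B i) = S ∧
    (∀ i, Disjoint A (B i)) ∧
    (∀ i j, i ≠ j → Disjoint (B i) (B j)) ∧
    ∀ u v : V, u ∈ S → v ∈ S → u ≠ v →
      (H.Adj u v ↔ u ∈ A ∨ v ∈ A ∨ ∃ i, u ∈ B i ∧ v ∈ B i)

lemma IsCrossFree.mono {H : SimpleGraph V} {N N' : Finset (V × V)} (h : IsCrossFree H N)
    (hN' : N' ⊆ N) : IsCrossFree H N' :=
  fun e he e' he' => h e (hN' he) e' (hN' he')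

lemma IsMatchingSet.mono {H : SimpleGraph V} {N N' : Finset (V × V)} (h : IsMatchingSet H N)
    (hN' : N' ⊆ N) : IsMatchingSet H N' :=
  ⟨fun e he => h.1 e (hN' he), fun e he e' he' hne => h.2 e (hN' he) e' (hN' he') hne⟩

lemma IsStarBlowupOn.exists_crossFree_subset {H : SimpleGraph V} {S : Set V}
    (hS : IsStarBlowupOn H S) (F : Finset (V × V))
    (hF : ∀ e ∈ F, e.1 ∈ S ∧ e.2 ∈ S ∧ Hᶜ.Adj e.1 e.2) :
    ∃ F' ⊆ F, IsCrossFree H F' ∧ #F ≤ 4 * #F' := by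
  classical
  obtain ⟨A, r, B, hAB_cover, hAB, hBB, hadj⟩ := hS
  have hnonadj (e : V × V) (he : e ∈ F) :
      ¬ (e.1 ∈ A ∨ e.2 ∈ A ∨ ∃ i, e.1 ∈ B i ∧ e.2 ∈ B i) := by
    obtain ⟨h1, h2, hnadj⟩ := hF e he
    rw [compl_adj] at hnadj
    rw [← hadj _ _ h1 h2 hnadj.1]
    exact hnadj.2
  have hmem_B (v : V) (hv : v ∈ S) (hvA : v ∉ A) : ∃ i, v ∈ B i := by
    rw [← hAB_cover] at hv
    exact Set.mem_iUnion.1 (hv.resolve_left hvA)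
  have hdiff (u v : V) (i j : Fin r) (hij : i ≠ j) (hu : u ∈ B i) (hv : v ∈ B j) :
      ¬ H.Adj u v := by
    intro huv
    have hS_of (w : V) (i : Fin r) (hw : w ∈ B i) : w ∈ S :=
      hAB_cover ▸ Or.inr (Set.mem_iUnion.2 ⟨i, hw⟩)
    rcases (hadj u v (hS_of u i hu) (hS_of v j hv) huv.ne).1 huv with huA | hvA | ⟨m, hum, hvm⟩
    · exact Set.disjoint_left.1 (hAB i) huA hu
    · exact Set.disjoint_left.1 (hAB j) hvA hv
    · have him : i = m := by_contra fun h => Set.disjoint_left.1 (hBB i m h) hu hum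
      have hjm : j = m := by_contra fun h => Set.disjoint_left.1 (hBB j m h) hv hvm
      exact hij (him.trans hjm.symm)
  rcases F.eq_empty_or_nonempty with rfl | ⟨e₀, he₀⟩
  · exact ⟨∅, subset_rfl, fun e he => absurd he (notMem_empty e), le_rfl⟩
  obtain ⟨i₀, -⟩ := hmem_B e₀.1 (hF e₀ he₀).1 fun h => hnonadj e₀ he₀ (Or.inl h)
  have : Nonempty (Fin r) := ⟨i₀⟩
  let part (v : V) : Fin r := Classical.epsilon (v ∈ B ·)
  have hpart₁ (e : V × V) (he : e ∈ F) : e.1 ∈ B (part e.1) :=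
    Classical.epsilon_spec (hmem_B _ (hF e he).1 fun h => hnonadj e he (Or.inl h))
  have hpart₂ (e : V × V) (he : e ∈ F) : e.2 ∈ B (part e.2) :=
    Classical.epsilon_spec (hmem_B _ (hF e he).2.1 fun h => hnonadj e he (Or.inr (Or.inl h)))
  obtain ⟨T, hT⟩ := exists_card_le_four_mul_card_filter_cut F (part ·.1) (part ·.2)
    fun e he h => hnonadj e he (Or.inr (Or.inr ⟨_, hpart₁ e he, h ▸ hpart₂ e he⟩))
  refine ⟨_, filter_subset _ _, fun e he e' he' => ?_, hT⟩
  rw [mem_filter] at he he'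
  exact hdiff _ _ (part e.1) (part e'.2) (fun h => he'.2.2 (h ▸ he.2.1)) (hpart₁ e he.1)
    (hpart₂ e' he'.1)

lemma exists_crossFree_subset_of_isStarBlowupOn [Finite V] {H : SimpleGraph V} {c : ℕ}
    (hcomp : Nat.card H.ConnectedComponent ≤ c)
    (hstar : ∀ C : H.ConnectedComponent, IsStarBlowupOn H C.supp)
    (N : Finset (V × V)) (hN : ∀ e ∈ N, Hᶜ.Adj e.1 e.2) :
    ∃ N' ⊆ N, IsCrossFree H N' ∧ #N ≤ 4 * c ^ 2 * #N' := by
  classical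
  rcases N.eq_empty_or_nonempty with rfl | ⟨e₀, -⟩
  · exact ⟨∅, subset_rfl, fun e he => absurd he (notMem_empty e), by simp⟩
  have : Nonempty V := ⟨e₀.1⟩
  obtain ⟨b, hb⟩ := exists_card_le_natCard_mul_card_fiber N
    fun e => (H.connectedComponentMk e.1, H.connectedComponentMk e.2)
  set F := {e ∈ N | (H.connectedComponentMk e.1, H.connectedComponentMk e.2) = b}
  have hF (e : V × V) (he : e ∈ F) :
      H.connectedComponentMk e.1 = b.1 ∧ H.connectedComponentMk e.2 = b.2 :=
    Prod.ext_iff.1 (mem_filter.1 he).2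
  obtain ⟨F', hF'F, hF', hFF'⟩ : ∃ F' ⊆ F, IsCrossFree H F' ∧ #F ≤ 4 * #F' := by
    by_cases hb12 : b.1 = b.2
    · refine (hstar b.1).exists_crossFree_subset F fun e he => ⟨(hF e he).1, ?_, ?_⟩
      · exact (hF e he).2.trans hb12.symm
      · exact hN e (filter_subset _ _ he)
    · refine ⟨F, subset_rfl, fun e he e' he' hadj => hb12 ?_, by omega⟩
      rw [← (hF e he).1, ← (hF e' he').2]
      exact ConnectedComponent.sound hadj.reachable
  refine ⟨F', hF'F.trans (filter_subset _ _), hF', ?_⟩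
  calc #N ≤ Nat.card (H.ConnectedComponent × H.ConnectedComponent) * #F := hb
    _ ≤ c ^ 2 * (4 * #F') := by
      rw [Nat.card_prod, sq]
      exact Nat.mul_le_mul (Nat.mul_le_mul hcomp hcomp) hFF'
    _ = 4 * c ^ 2 * #F' := by ring

lemma exists_crossFree_subset_iterate {ι : Type*} (H : ι → SimpleGraph V) (K : ℕ)
    (S : Finset ι)
    (hstep : ∀ ℓ ∈ S, ∀ N : Finset (V × V), (∀ e ∈ N, (H ℓ)ᶜ.Adj e.1 e.2) →
      ∃ N' ⊆ N, IsCrossFree (H ℓ) N' ∧ #N ≤ K * #N')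
    (N : Finset (V × V)) (hN : ∀ ℓ ∈ S, ∀ e ∈ N, (H ℓ)ᶜ.Adj e.1 e.2) :
    ∃ N' ⊆ N, (∀ ℓ ∈ S, IsCrossFree (H ℓ) N') ∧ #N ≤ K ^ #S * #N' := by
  classical
  induction S using Finset.induction_on generalizing N with
  | empty => exact ⟨N, subset_rfl, by simp, by simp⟩
  | insert ℓ S hℓ ih =>
    obtain ⟨N₁, hN₁N, hN₁, hcard₁⟩ := ih (fun m hm => hstep m (mem_insert_of_mem hm)) N
      fun m hm => hN m (mem_insert_of_mem hm)
    obtain ⟨N₂, hN₂N₁, hN₂, hcard₂⟩ := hstep ℓ (mem_insert_self ℓ S) N₁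
      fun e he => hN ℓ (mem_insert_self ℓ S) e (hN₁N he)
    refine ⟨N₂, hN₂N₁.trans hN₁N, forall_mem_insert _ _ _ |>.2
      ⟨hN₂, fun m hm => (hN₁ m hm).mono hN₂N₁⟩, ?_⟩
    calc #N ≤ K ^ #S * #N₁ := hcard₁
      _ ≤ K ^ #S * (K * #N₂) := Nat.mul_le_mul_left _ hcard₂
      _ = K ^ #(insert ℓ S) * #N₂ := by rw [card_insert_of_notMem hℓ, pow_succ, mul_assoc]

lemma IsMatchingSet.card_le_ncard_nonNeighbours [Finite V] {G : SimpleGraph V}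
    {N : Finset (V × V)} (hN : IsMatchingSet Gᶜ N) (hcross : IsCrossFree G N) {e₀ : V × V}
    (he₀ : e₀ ∈ N) : #N ≤ ({v | v ≠ e₀.1 ∧ ¬ G.Adj e₀.1 v} : Set V).ncard := by
  classical
  have hinj : Set.InjOn Prod.snd (N : Set (V × V)) := fun e he e' he' h =>
    by_contra fun hne => (hN.2 e he e' he' hne).2.2.2 h
  calc #N = #(N.image Prod.snd) := (card_image_of_injOn hinj).symm
    _ = (N.image Prod.snd : Set V).ncard := (Set.ncard_coe_finset _).symm
    _ ≤ _ := by
      refine Set.ncard_le_ncard (fun v hv => ?_) (Set.toFinite _)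
      obtain ⟨e, he, rfl⟩ := mem_image.1 hv
      refine ⟨fun h => ?_, hcross e₀ he₀ e he⟩
      by_cases hee : e₀ = e
      · exact ((compl_adj G _ _).1 (hN.1 e he)).1 (hee ▸ h.symm)
      · exact (hN.2 e₀ he₀ e he hee).2.1 h.symm

theorem stmt_16_general {V : Type*} [Fintype V] (k c : ℕ)
    (δ : ℝ) (hδ : 0 < δ) (n : ℕ)
    (G₁ : SimpleGraph V) (Gc : Fin k → SimpleGraph V)
    (hsub : ∀ ℓ, Gc ℓ ≤ G₁)
    (hcover : ∀ u v : V, G₁.Adj u v → ∃ ℓ, (Gc ℓ).Adj u v)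
    (hdeg : ∀ u : V, (({v | v ≠ u ∧ ¬ G₁.Adj u v} : Set V).ncard : ℝ) ≤ δ * n)
    (hcomp : ∀ ℓ : Fin k, Nat.card (Gc ℓ).ConnectedComponent ≤ c)
    (hstar : ∀ (ℓ : Fin k) (C : (Gc ℓ).ConnectedComponent),
      ∃ (A : Set V) (r : ℕ) (B : Fin r → Set V),
        (A ∪ ⋃ i, B i) = C.supp ∧
        (∀ i, Disjoint A (B i)) ∧
        (∀ i j, i ≠ j → Disjoint (B i) (B j)) ∧
        ∀ u v : V, u ∈ C.supp → v ∈ C.supp → u ≠ v →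
          ((Gc ℓ).Adj u v ↔ u ∈ A ∨ v ∈ A ∨ ∃ i, u ∈ B i ∧ v ∈ B i)) :
    ∀ M : Finset (V × V), IsMatchingSet G₁ᶜ M →
      (M.card : ℝ) ≤ (2 * c : ℝ) ^ (2 * k) * 4 ^ k * δ * n := by
  intro M hM
  obtain ⟨N, hNM, hcross, hcard⟩ := exists_crossFree_subset_iterate Gc (4 * c ^ 2) univ
    (fun ℓ _ => exists_crossFree_subset_of_isStarBlowupOn (hcomp ℓ) (hstar ℓ))
    M fun ℓ _ e he => compl_le_compl (hsub ℓ) (hM.1 e he)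
  have hcross₁ : IsCrossFree G₁ N := fun e he e' he' hadj => by
    obtain ⟨ℓ, hℓ⟩ := hcover _ _ hadj
    exact hcross ℓ (mem_univ ℓ) e he e' he' hℓ
  have hδn : 0 ≤ δ * n := by positivity
  have hN : (#N : ℝ) ≤ δ * n := by
    rcases N.eq_empty_or_nonempty with rfl | ⟨e₀, he₀⟩
    · rwa [card_empty, Nat.cast_zero]
    · exact (Nat.cast_le.2 ((hM.mono hNM).card_le_ncard_nonNeighbours hcross₁ he₀)).trans
        (hdeg e₀.1)
  rw [card_univ, Fintype.card_fin] at hcard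
  calc (#M : ℝ) ≤ ((4 * c ^ 2 : ℕ) : ℝ) ^ k * #N := by exact_mod_cast hcard
    _ = (2 * c : ℝ) ^ (2 * k) * #N := by rw [pow_mul]; push_cast; ring
    _ ≤ (2 * c : ℝ) ^ (2 * k) * (δ * n) := by gcongr
    _ ≤ (2 * c : ℝ) ^ (2 * k) * 4 ^ k * (δ * n) :=
      mul_le_mul_of_nonneg_right (le_mul_of_one_le_right (by positivity)
        (one_le_pow₀ (by norm_num))) hδn
    _ = (2 * c : ℝ) ^ (2 * k) * 4 ^ k * δ * n := by ring

/-- Claim `claim:matching-complement` (abstract form): if `G₁` is a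
`k`-multicoloured graph (colour classes `Gc 0, …, Gc (k-1)` covering `E(G₁)`), every vertex has
at most `δn` non-neighbours, each colour has at most `c` components, and every monochromatic
component induces a complete blow-up of a star, then the complement of `G₁` has no matching
with more than `(2c)^{2k} · 4^k · δ n` edges. -/
theorem stmt_16 {V : Type*} [Fintype V] (k c : ℕ) (hk : 1 ≤ k) (hc : 1 ≤ c)
    (δ : ℝ) (hδ : 0 < δ) (n : ℕ) (hn : 1 ≤ n)
    (G₁ : SimpleGraph V) (Gc : Fin k → SimpleGraph V)
    (hsub : ∀ ℓ, Gc ℓ ≤ G₁)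
    (hcover : ∀ u v : V, G₁.Adj u v → ∃ ℓ, (Gc ℓ).Adj u v)
    (hdeg : ∀ u : V, (({v | v ≠ u ∧ ¬ G₁.Adj u v} : Set V).ncard : ℝ) ≤ δ * n)
    (hcomp : ∀ ℓ : Fin k, Nat.card (Gc ℓ).ConnectedComponent ≤ c)
    (hstar : ∀ (ℓ : Fin k) (C : (Gc ℓ).ConnectedComponent),
      ∃ (A : Set V) (r : ℕ) (B : Fin r → Set V),
        (A ∪ ⋃ i, B i) = C.supp ∧
        (∀ i, Disjoint A (B i)) ∧
        (∀ i j, i ≠ j → Disjoint (B i) (B j)) ∧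
        ∀ u v : V, u ∈ C.supp → v ∈ C.supp → u ≠ v →
          ((Gc ℓ).Adj u v ↔ u ∈ A ∨ v ∈ A ∨ ∃ i, u ∈ B i ∧ v ∈ B i)) :
    ∀ M : Finset (V × V), IsMatchingSet G₁ᶜ M →
      (M.card : ℝ) ≤ (2 * c : ℝ) ^ (2 * k) * 4 ^ k * δ * n :=
  stmt_16_general k c δ hδ n G₁ Gc hsub hcover hdeg hcomp hstar
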